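/- arXiv:1801.03381 — 10 statements merged into one kernel-verified Lean document; each statement's English description precedes it below -/
import Mathlib

section
/- Let A be an m×N real matrix, K ⊆ {1,...,N}, and let x₀ = 𝟙_K be the indicator vector of K. If x₀ is the unique minimizer of ‖x‖₁ over {x ∈ [0,1]^N : Ax = Ax₀}, then every w ∈ ker(A) with w_i ≤ 0 for i ∈ K and w_i ≥ 0 for i ∉ K and w ≠ 0 satisfies Σ_i w_i > 0. -/
open Finset

theorem stmt_0 (m N : ℕ) (A : Matrix (Fin m) (Fin N) ℝ) (K : Set (Fin N))
    (x₀ : Fin N → ℝ) (hx₀ : x₀ = Set.indicator K (fun _ => (1 : ℝ)))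
    (huniq : ∀ x : Fin N → ℝ, (∀ i, x i ∈ Set.Icc (0 : ℝ) 1) →
      A.mulVec x = A.mulVec x₀ → x ≠ x₀ → ∑ i, |x₀ i| < ∑ i, |x i|) :
    ∀ w : Fin N → ℝ, A.mulVec w = 0 →
      (∀ i ∈ K, w i ≤ 0) → (∀ i ∉ K, 0 ≤ w i) → w ≠ 0 →
      0 < ∑ i, w i := by
  intro w hker hK hKc hw
  classical
  set S : ℝ := ∑ i, |w i| with hS
  have hS0 : 0 ≤ S := Finset.sum_nonneg fun i _ => abs_nonneg _
  set t : ℝ := 1 / (1 + S) with ht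
  have h1S : 0 < 1 + S := by linarith
  have ht0 : 0 < t := by positivity
  have htw : ∀ i, t * |w i| < 1 := by
    intro i
    have hle : |w i| ≤ S := Finset.single_le_sum (fun j _ => abs_nonneg (w j)) (Finset.mem_univ i)
    have : t * |w i| ≤ S / (1 + S) := by
      rw [ht, div_mul_eq_mul_div, one_mul]
      exact div_le_div_of_nonneg_right hle h1S.le |>.trans_eq rfl
    calc t * |w i| ≤ S / (1 + S) := this
      _ < 1 := by rw [div_lt_one h1S]; linarith
  set x : Fin N → ℝ := fun i => x₀ i + t * w i with hx
  have hx01 : ∀ i, x i ∈ Set.Icc (0 : ℝ) 1 := by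
    intro i
    by_cases hi : i ∈ K
    · have hx0i : x₀ i = 1 := by simp [hx₀, Set.indicator_of_mem hi]
      have hwi := hK i hi
      have habs : |w i| = -w i := abs_of_nonpos hwi
      have h1 := htw i
      constructor
      · simp only [hx, hx0i]; nlinarith [htw i]
      · simp only [hx, hx0i]; nlinarith [ht0]
    · have hx0i : x₀ i = 0 := by simp [hx₀, Set.indicator_of_notMem hi]
      have hwi := hKc i hi
      have habs : |w i| = w i := abs_of_nonneg hwi
      constructor
      · simp only [hx, hx0i]; nlinarith
      · simp only [hx, hx0i]; nlinarith [htw i]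
  have hAx : A.mulVec x = A.mulVec x₀ := by
    have : x = x₀ + t • w := by funext i; simp [hx, smul_eq_mul]
    rw [this, Matrix.mulVec_add, Matrix.mulVec_smul, hker]
    simp
  have hxne : x ≠ x₀ := by
    intro h
    apply hw
    funext i
    have := congrFun h i
    simp only [hx] at this
    have : t * w i = 0 := by linarith
    have := mul_eq_zero.mp this
    rcases this with h' | h'
    · exact absurd h' (ne_of_gt ht0)
    · simpa using h'
  have hlt := huniq x hx01 hAx hxne
  have hsum : ∑ i, |x i| = ∑ i, |x₀ i| + t * ∑ i, w i := by
    rw [Finset.mul_sum, ← Finset.sum_add_distrib]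
    apply Finset.sum_congr rfl
    intro i _
    by_cases hi : i ∈ K
    · have hx0i : x₀ i = 1 := by simp [hx₀, Set.indicator_of_mem hi]
      have habs : |w i| = -w i := abs_of_nonpos (hK i hi)
      have h1 := htw i
      have : x i = 1 + t * w i := by simp [hx, hx0i]
      rw [this, hx0i, abs_of_nonneg (by nlinarith), abs_one]
    · have hx0i : x₀ i = 0 := by simp [hx₀, Set.indicator_of_notMem hi]
      have habs : |w i| = w i := abs_of_nonneg (hKc i hi)
      have : x i = t * w i := by simp [hx, hx0i]
      rw [this, hx0i, abs_of_nonneg (mul_nonneg ht0.le (hKc i hi)), abs_zero, zero_add]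
  rw [hsum] at hlt
  have : 0 < t * ∑ i, w i := by linarith
  nlinarith [this, ht0]
end

section
/- Let A be an m×N real matrix and K ⊆ [N]. If ker(A) ∩ N⁺ ∩ H_K = {0}, where H_K = {w : w_i ≤ 0 for i ∈ K, w_i ≥ 0 for i ∉ K} and N⁺ = {w : Σ_i w_i ≤ 0}, then 𝟙_K is the unique minimizer of ‖x‖₁ over {x ∈ [0,1]^N : Ax = A𝟙_K}. -/
open Finset

theorem stmt_1 (m N : ℕ) (A : Matrix (Fin m) (Fin N) ℝ) (K : Set (Fin N))
    (x₀ : Fin N → ℝ) (hx₀ : x₀ = Set.indicator K (fun _ => (1 : ℝ)))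
    (hNSP : ∀ w : Fin N → ℝ, A.mulVec w = 0 → (∑ i, w i) ≤ 0 →
      (∀ i ∈ K, w i ≤ 0) → (∀ i ∉ K, 0 ≤ w i) → w = 0) :
    ∀ x : Fin N → ℝ, (∀ i, x i ∈ Set.Icc (0 : ℝ) 1) →
      A.mulVec x = A.mulVec x₀ → x ≠ x₀ → ∑ i, |x₀ i| < ∑ i, |x i| := by
  intro x hbox hAx hne
  have hmem : ∀ i ∈ K, x₀ i = 1 := by
    intro i hi; rw [hx₀]; exact Set.indicator_of_mem hi _
  have hnmem : ∀ i ∉ K, x₀ i = 0 := by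
    intro i hi; rw [hx₀]; exact Set.indicator_of_notMem hi _
  have hAw : A.mulVec (x - x₀) = 0 := by
    rw [A.mulVec_sub, hAx, sub_self]
  have hK : ∀ i ∈ K, (x - x₀) i ≤ 0 := by
    intro i hi
    have := (hbox i).2
    simp only [Pi.sub_apply, hmem i hi]
    linarith
  have hKc : ∀ i ∉ K, 0 ≤ (x - x₀) i := by
    intro i hi
    have := (hbox i).1
    simp only [Pi.sub_apply, hnmem i hi]
    linarith
  have hsum : ¬ (∑ i, (x - x₀) i) ≤ 0 := by
    intro hle
    have := hNSP (x - x₀) hAw hle hK hKc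
    exact hne (by funext i; have := congrFun this i; simpa [sub_eq_zero] using this)
  push_neg at hsum
  have h1 : ∑ i, |x₀ i| = ∑ i, x₀ i := by
    apply Finset.sum_congr rfl; intro i _
    rw [abs_of_nonneg (by rw [hx₀]; exact Set.indicator_nonneg (fun _ _ => zero_le_one) i)]
  have h2 : ∑ i, |x i| = ∑ i, x i := by
    apply Finset.sum_congr rfl; intro i _
    exact abs_of_nonneg (hbox i).1
  rw [h1, h2]
  have := Finset.sum_sub_distrib (s := Finset.univ) (f := x) (g := x₀)
  simp only [Pi.sub_apply] at hsum
  rw [Finset.sum_sub_distrib] at hsum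
  linarith
end

section
/- Let A ∈ ℝ^{m×N} and K, S ⊆ [N]. Suppose 𝟙_K is the unique minimizer of ‖x‖₁ over {x ∈ [0,1]^N : Ax = A𝟙_K} and 𝟙_S is the unique minimizer of ‖x‖₁ over {x ∈ [0,1]^N : Ax = A𝟙_S}. Then ker(A) ∩ H_K ∩ H_{Sᶜ} = {0}. -/
open Finset

lemma stmt_2_aux (m N : ℕ) (A : Matrix (Fin m) (Fin N) ℝ) (T : Set (Fin N))
    (x0 : Fin N → ℝ) (hx0 : x0 = Set.indicator T (fun _ => (1 : ℝ)))
    (huniq : ∀ x : Fin N → ℝ, (∀ i, x i ∈ Set.Icc (0 : ℝ) 1) →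
      A.mulVec x = A.mulVec x0 → x ≠ x0 → ∑ i, |x0 i| < ∑ i, |x i|)
    (v : Fin N → ℝ) (hv : A.mulVec v = 0)
    (h1 : ∀ i ∈ T, v i ≤ 0) (h2 : ∀ i ∉ T, 0 ≤ v i) (hv0 : v ≠ 0) :
    0 < ∑ i, v i := by
  set M := ∑ i, |v i| with hM
  have hM0 : 0 ≤ M := Finset.sum_nonneg fun i _ => abs_nonneg _
  set ε := (1 + M)⁻¹ with hε
  have hεpos : 0 < ε := by positivity
  have hεM : ε * (1 + M) = 1 := inv_mul_cancel₀ (by positivity)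
  have hbound : ∀ i, ε * |v i| ≤ 1 := by
    intro i
    have h1' : |v i| ≤ M := Finset.single_le_sum (fun j _ => abs_nonneg (v j)) (mem_univ i)
    nlinarith
  set x : Fin N → ℝ := fun i => x0 i + ε * v i with hxdef
  have hx01 : ∀ i, x i ∈ Set.Icc (0 : ℝ) 1 := by
    intro i
    by_cases hi : i ∈ T
    · have hvi := h1 i hi
      have habs : |v i| = -v i := abs_of_nonpos hvi
      have hb := hbound i
      rw [habs] at hb
      constructor
      · simp only [hxdef, hx0, Set.indicator_of_mem hi]
        nlinarith
      · simp only [hxdef, hx0, Set.indicator_of_mem hi]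
        nlinarith
    · have hvi := h2 i hi
      have habs : |v i| = v i := abs_of_nonneg hvi
      have hb := hbound i
      rw [habs] at hb
      constructor
      · simp only [hxdef, hx0, Set.indicator_of_notMem hi]
        nlinarith
      · simp only [hxdef, hx0, Set.indicator_of_notMem hi]
        nlinarith
  have hAx : A.mulVec x = A.mulVec x0 := by
    have hxeq : x = x0 + ε • v := by
      funext i; simp [hxdef, smul_eq_mul]
    rw [hxeq, Matrix.mulVec_add, Matrix.mulVec_smul, hv]
    simp
  have hxne : x ≠ x0 := by
    intro h
    apply hv0
    funext i
    have := congrFun h i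
    simp only [hxdef] at this
    have : ε * v i = 0 := by linarith
    have := mul_eq_zero.mp this
    rcases this with h' | h'
    · exact absurd h' (ne_of_gt hεpos)
    · exact h'
  have habs : ∀ i, |x i| = |x0 i| + ε * v i := by
    intro i
    have h0 := (hx01 i).1
    by_cases hi : i ∈ T
    · have hb := hbound i
      rw [abs_of_nonpos (h1 i hi)] at hb
      simp only [hxdef, hx0, Set.indicator_of_mem hi] at h0 ⊢
      rw [abs_of_nonneg h0, abs_one]
    · simp only [hxdef, hx0, Set.indicator_of_notMem hi] at h0 ⊢
      rw [abs_of_nonneg h0, abs_zero]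
  have hsum := huniq x hx01 hAx hxne
  rw [show (∑ i, |x i|) = ∑ i, |x0 i| + ε * ∑ i, v i by
    rw [Finset.mul_sum, ← Finset.sum_add_distrib]
    exact Finset.sum_congr rfl fun i _ => habs i] at hsum
  have hpos : 0 < ε * ∑ i, v i := by linarith
  by_contra hne
  push_neg at hne
  nlinarith [mul_nonpos_of_nonneg_of_nonpos hεpos.le hne]

theorem stmt_2 (m N : ℕ) (A : Matrix (Fin m) (Fin N) ℝ) (K S : Set (Fin N))
    (xK xS : Fin N → ℝ)
    (hxK : xK = Set.indicator K (fun _ => (1 : ℝ)))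
    (hxS : xS = Set.indicator S (fun _ => (1 : ℝ)))
    (huniqK : ∀ x : Fin N → ℝ, (∀ i, x i ∈ Set.Icc (0 : ℝ) 1) →
      A.mulVec x = A.mulVec xK → x ≠ xK → ∑ i, |xK i| < ∑ i, |x i|)
    (huniqS : ∀ x : Fin N → ℝ, (∀ i, x i ∈ Set.Icc (0 : ℝ) 1) →
      A.mulVec x = A.mulVec xS → x ≠ xS → ∑ i, |xS i| < ∑ i, |x i|) :
    ∀ w : Fin N → ℝ, A.mulVec w = 0 →
      (∀ i ∈ K, w i ≤ 0) → (∀ i ∉ K, 0 ≤ w i) →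
      (∀ i ∉ S, w i ≤ 0) → (∀ i ∈ S, 0 ≤ w i) →
      w = 0 := by
  intro w hw hK1 hK2 hS1 hS2
  by_contra hw0
  have hKsum : 0 < ∑ i, w i :=
    stmt_2_aux m N A K xK hxK huniqK w hw hK1 hK2 hw0
  have hSsum : 0 < ∑ i, (-w) i := by
    apply stmt_2_aux m N A S xS hxS huniqS (-w)
    · rw [Matrix.mulVec_neg, hw, neg_zero]
    · intro i hi; simpa using hS2 i hi
    · intro i hi; simpa using hS1 i hi
    · exact neg_ne_zero.mpr hw0
  simp only [Pi.neg_apply, Finset.sum_neg_distrib] at hSsum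
  linarith
end

section
/- Let A ∈ ℝ^{m×N} and K ⊆ [N]. Then ker(A) ∩ H_K = {0} if and only if the set {x ∈ [0,1]^N : Ax = A𝟙_K} equals the singleton {𝟙_K}. -/
open Finset

theorem stmt_3 (m N : ℕ) (A : Matrix (Fin m) (Fin N) ℝ) (K : Set (Fin N))
    (xK : Fin N → ℝ) (hxK : xK = Set.indicator K (fun _ => (1 : ℝ))) :
    (∀ w : Fin N → ℝ, A.mulVec w = 0 →
        (∀ i ∈ K, w i ≤ 0) → (∀ i ∉ K, 0 ≤ w i) → w = 0) ↔
      {x : Fin N → ℝ | (∀ i, x i ∈ Set.Icc (0 : ℝ) 1) ∧ A.mulVec x = A.mulVec xK}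
        = {xK} := by
  constructor
  · intro h
    ext x
    simp only [Set.mem_setOf_eq, Set.mem_singleton_iff]
    constructor
    · rintro ⟨hx, hAx⟩
      have hw := h (x - xK) ?_ ?_ ?_
      · funext i
        have := congrFun hw i
        simpa [sub_eq_zero] using this
      · rw [Matrix.mulVec_sub, hAx, sub_self]
      · intro i hi
        have hK : xK i = 1 := by simp [hxK, Set.indicator_of_mem hi]
        have := (hx i).2
        simp only [Pi.sub_apply, hK]
        linarith
      · intro i hi
        have hK : xK i = 0 := by simp [hxK, Set.indicator_of_notMem hi]
        have := (hx i).1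
        simp only [Pi.sub_apply, hK]
        linarith
    · rintro rfl
      refine ⟨fun i => ?_, rfl⟩
      by_cases hi : i ∈ K <;>
        simp [hxK, hi, Set.indicator_of_mem, Set.indicator_of_notMem]
  · intro h w hAw h1 h2
    set t : ℝ := (1 + ∑ i, |w i|)⁻¹ with ht
    have hsum : 0 ≤ ∑ i, |w i| := Finset.sum_nonneg fun i _ => abs_nonneg _
    have htpos : 0 < t := inv_pos.2 (by linarith)
    have hb : ∀ i, t * |w i| ≤ 1 := by
      intro i
      have h1' : |w i| ≤ 1 + ∑ j, |w j| := by
        have := Finset.single_le_sum (f := fun j => |w j|)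
          (fun j _ => abs_nonneg _) (Finset.mem_univ i)
        linarith
      rw [ht]
      rw [inv_mul_le_iff₀ (by linarith : (0:ℝ) < 1 + ∑ j, |w j|), mul_one]
      exact h1'
    have hmem : (xK + t • w) ∈
        {x : Fin N → ℝ | (∀ i, x i ∈ Set.Icc (0 : ℝ) 1) ∧
          A.mulVec x = A.mulVec xK} := by
      constructor
      · intro i
        have habs := hb i
        have habs1 : t * w i ≤ t * |w i| :=
          mul_le_mul_of_nonneg_left (le_abs_self _) htpos.le
        have habs2 : -(t * |w i|) ≤ t * w i := by
          have : -|w i| ≤ w i := neg_abs_le _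
          nlinarith
        by_cases hi : i ∈ K
        · have hK : xK i = 1 := by simp [hxK, Set.indicator_of_mem hi]
          have hwle : w i ≤ 0 := h1 i hi
          constructor
          · simp only [Pi.add_apply, Pi.smul_apply, smul_eq_mul, hK]
            linarith
          · simp only [Pi.add_apply, Pi.smul_apply, smul_eq_mul, hK]
            nlinarith
        · have hK : xK i = 0 := by simp [hxK, Set.indicator_of_notMem hi]
          have hwge : 0 ≤ w i := h2 i hi
          constructor
          · simp only [Pi.add_apply, Pi.smul_apply, smul_eq_mul, hK]
            nlinarith
          · simp only [Pi.add_apply, Pi.smul_apply, smul_eq_mul, hK]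
            linarith
      · rw [Matrix.mulVec_add, Matrix.mulVec_smul, hAw, smul_zero, add_zero]
    rw [h, Set.mem_singleton_iff] at hmem
    have : t • w = 0 := by
      have := congrArg (fun v => v - xK) hmem
      simpa using this
    funext i
    have := congrFun this i
    simp only [Pi.smul_apply, smul_eq_mul, Pi.zero_apply] at this
    have := mul_eq_zero.mp this
    rcases this with h' | h'
    · exact absurd h' htpos.ne'
    · exact h'
end

section
/- Let A ∈ ℝ^{m×N} and K ⊆ [N]. Then ker(A) ∩ H_K = {0} if and only if {x ∈ [0,1]^N : Ax = A𝟙_{Kᶜ}} = {𝟙_{Kᶜ}}. -/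
open Finset

theorem stmt_4 (m N : ℕ) (A : Matrix (Fin m) (Fin N) ℝ) (K : Set (Fin N))
    (xKc : Fin N → ℝ) (hxKc : xKc = Set.indicator Kᶜ (fun _ => (1 : ℝ))) :
    (∀ w : Fin N → ℝ, A.mulVec w = 0 →
        (∀ i ∈ K, w i ≤ 0) → (∀ i ∉ K, 0 ≤ w i) → w = 0) ↔
      {x : Fin N → ℝ | (∀ i, x i ∈ Set.Icc (0 : ℝ) 1) ∧ A.mulVec x = A.mulVec xKc}
        = {xKc} := by
  have hK0 : ∀ i ∈ K, xKc i = 0 := by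
    intro i hi
    simp [hxKc, Set.indicator_apply, hi]
  have hK1 : ∀ i ∉ K, xKc i = 1 := by
    intro i hi
    simp [hxKc, Set.indicator_apply, hi]
  constructor
  · intro h
    ext x
    simp only [Set.mem_setOf_eq, Set.mem_singleton_iff]
    constructor
    · rintro ⟨hx01, hAx⟩
      have hw := h (xKc - x) ?_ ?_ ?_
      · have : xKc - x = 0 := hw
        have := sub_eq_zero.mp this
        exact this.symm
      · rw [Matrix.mulVec_sub, hAx, sub_self]
      · intro i hi
        simp only [Pi.sub_apply, hK0 i hi]
        linarith [(hx01 i).1]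
      · intro i hi
        simp only [Pi.sub_apply, hK1 i hi]
        linarith [(hx01 i).2]
    · rintro rfl
      refine ⟨?_, rfl⟩
      intro i
      by_cases hi : i ∈ K
      · simp [hK0 i hi]
      · simp [hK1 i hi]
  · intro h w hAw hwK hwKc
    set c : ℝ := (∑ i, |w i|) + 1 with hc
    have hsum : (0:ℝ) ≤ ∑ i, |w i| := Finset.sum_nonneg fun i _ => abs_nonneg _
    have hcpos : 0 < c := by positivity
    have habs : ∀ i, |w i| ≤ c := by
      intro i
      have : |w i| ≤ ∑ j, |w j| :=
        Finset.single_le_sum (fun j _ => abs_nonneg (w j)) (Finset.mem_univ i)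
      linarith
    set x : Fin N → ℝ := xKc - c⁻¹ • w with hx
    have hxmem : x ∈ {x : Fin N → ℝ | (∀ i, x i ∈ Set.Icc (0 : ℝ) 1) ∧
        A.mulVec x = A.mulVec xKc} := by
      constructor
      · intro i
        have h1 : c⁻¹ * |w i| ≤ 1 := by
          rw [inv_mul_le_iff₀ hcpos, mul_one]
          exact habs i
        have h2 : |c⁻¹ * w i| ≤ 1 := by
          rw [abs_mul, abs_of_pos (inv_pos.mpr hcpos)]
          exact h1
        have h3 := abs_le.mp h2
        by_cases hi : i ∈ K
        · have hw0 : w i ≤ 0 := hwK i hi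
          constructor
          · simp only [hx, Pi.sub_apply, Pi.smul_apply, smul_eq_mul, hK0 i hi]
            nlinarith [inv_pos.mpr hcpos]
          · simp only [hx, Pi.sub_apply, Pi.smul_apply, smul_eq_mul, hK0 i hi]
            linarith [h3.1]
        · have hw0 : 0 ≤ w i := hwKc i hi
          constructor
          · simp only [hx, Pi.sub_apply, Pi.smul_apply, smul_eq_mul, hK1 i hi]
            linarith [h3.2]
          · simp only [hx, Pi.sub_apply, Pi.smul_apply, smul_eq_mul, hK1 i hi]
            nlinarith [inv_pos.mpr hcpos]
      · rw [hx, Matrix.mulVec_sub, Matrix.mulVec_smul, hAw, smul_zero, sub_zero]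
    rw [h] at hxmem
    have : c⁻¹ • w = 0 := sub_eq_self.mp hxmem
    have hcne : (c:ℝ)⁻¹ ≠ 0 := inv_ne_zero (ne_of_gt hcpos)
    exact (smul_eq_zero.mp this).resolve_left hcne
end

section
/- Let A ∈ ℝ^{m×N} and K ⊆ [N]. If ker(A) ∩ H_K = {0}, then both 𝟙_K and 𝟙_{Kᶜ} = 𝟙 - 𝟙_K are the unique minimizers of ‖x‖₁ over {x ∈ [0,1]^N : Ax = A𝟙_K} and {x ∈ [0,1]^N : Ax = A𝟙_{Kᶜ}}, respectively. -/
open Finset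

theorem stmt_5 (m N : ℕ) (A : Matrix (Fin m) (Fin N) ℝ) (K : Set (Fin N))
    (xK xKc : Fin N → ℝ)
    (hxK : xK = Set.indicator K (fun _ => (1 : ℝ)))
    (hxKc : xKc = Set.indicator Kᶜ (fun _ => (1 : ℝ)))
    (hker : ∀ w : Fin N → ℝ, A.mulVec w = 0 →
      (∀ i ∈ K, w i ≤ 0) → (∀ i ∉ K, 0 ≤ w i) → w = 0) :
    (∀ x : Fin N → ℝ, (∀ i, x i ∈ Set.Icc (0 : ℝ) 1) →
        A.mulVec x = A.mulVec xK → x ≠ xK → ∑ i, |xK i| < ∑ i, |x i|) ∧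
    (∀ x : Fin N → ℝ, (∀ i, x i ∈ Set.Icc (0 : ℝ) 1) →
        A.mulVec x = A.mulVec xKc → x ≠ xKc → ∑ i, |xKc i| < ∑ i, |x i|) := by
  constructor
  · intro x hx hAx hne
    exfalso
    apply hne
    have h0 : A.mulVec (x - xK) = 0 := by
      rw [Matrix.mulVec_sub, hAx, sub_self]
    have := hker (x - xK) h0
      (fun i hi => by
        have h1 : xK i = 1 := by rw [hxK]; exact Set.indicator_of_mem hi _
        simp only [Pi.sub_apply, h1]
        linarith [(hx i).2])
      (fun i hi => by
        have h1 : xK i = 0 := by rw [hxK]; exact Set.indicator_of_notMem hi _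
        simp only [Pi.sub_apply, h1]
        linarith [(hx i).1])
    exact sub_eq_zero.mp this
  · intro x hx hAx hne
    exfalso
    apply hne
    have h0 : A.mulVec (xKc - x) = 0 := by
      rw [Matrix.mulVec_sub, hAx, sub_self]
    have := hker (xKc - x) h0
      (fun i hi => by
        have h1 : xKc i = 0 := by
          rw [hxKc]; exact Set.indicator_of_notMem (by simpa using hi) _
        simp only [Pi.sub_apply, h1]
        linarith [(hx i).1])
      (fun i hi => by
        have h1 : xKc i = 1 := by
          rw [hxKc]; exact Set.indicator_of_mem (by simpa using hi) _
        simp only [Pi.sub_apply, h1]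
        linarith [(hx i).2])
    exact (sub_eq_zero.mp this).symm
end

section
/- Let A ∈ ℝ^{m×N} with columns a₁,...,a_N and K ⊆ [N]. If ker(A) ∩ H_K = {0}, then 0 does not belong to the convex hull of {a_i : i ∈ K} ∪ {-a_i : i ∉ K}. -/
open Finset

theorem stmt_6 (m N : ℕ) (A : Matrix (Fin m) (Fin N) ℝ) (K : Set (Fin N))
    (c : Fin N → (Fin m → ℝ)) (hc : ∀ i r, c i r = A r i)
    (hker : ∀ w : Fin N → ℝ, A.mulVec w = 0 →
      (∀ i ∈ K, w i ≤ 0) → (∀ i ∉ K, 0 ≤ w i) → w = 0) :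
    (0 : Fin m → ℝ) ∉ convexHull ℝ
      ({v | ∃ i ∈ K, v = c i} ∪ {v | ∃ i ∉ K, v = -c i}) := by
  classical
  intro h
  rw [mem_convexHull_iff_exists_fintype] at h
  obtain ⟨ι, _, w, z, hw₀, hw₁, hz, hx⟩ := h
  -- choose for each index an element of Fin N
  have hgf : ∀ i, ∃ k : Fin N, z i = (if k ∈ K then c k else -c k) := by
    intro i
    rcases hz i with ⟨k, hk, hzk⟩ | ⟨k, hk, hzk⟩
    · exact ⟨k, by simp [hk, hzk]⟩
    · exact ⟨k, by simp [hk, hzk]⟩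
  choose g hg using hgf
  set f : Fin N → (Fin m → ℝ) := fun k => if k ∈ K then c k else -c k with hf
  set t : Fin N → ℝ := fun k => ∑ i ∈ Finset.univ.filter (fun i => g i = k), w i with ht
  have ht0 : ∀ k, 0 ≤ t k := fun k => Finset.sum_nonneg fun i _ => hw₀ i
  have hsum : ∑ k, t k • f k = 0 := by
    rw [← hx]
    rw [show (∑ k, t k • f k) = ∑ k, ∑ i ∈ Finset.univ.filter (fun i => g i = k), w i • f k by
      simp [ht, Finset.sum_smul]]
    rw [← Finset.sum_fiberwise Finset.univ g (fun i => w i • z i)]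
    refine Finset.sum_congr rfl fun k _ => Finset.sum_congr rfl fun i hi => ?_
    simp only [Finset.mem_filter] at hi
    rw [hg i, hi.2]
  have hsumt : ∑ k, t k = 1 := by
    rw [← hw₁, ht]
    exact Finset.sum_fiberwise Finset.univ g w
  set w' : Fin N → ℝ := fun k => if k ∈ K then -t k else t k with hw'
  have hker' : w' = 0 := by
    apply hker
    · funext r
      have := congrFun hsum r
      simp only [Finset.sum_apply, Pi.smul_apply, Pi.zero_apply, smul_eq_mul] at this
      have : ∑ k, A r k * w' k = -∑ k, t k * f k r := by
        rw [← Finset.sum_neg_distrib]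
        refine Finset.sum_congr rfl fun k _ => ?_
        by_cases hk : k ∈ K <;> simp [hw', hf, hk, hc] <;> ring
      simp only [Matrix.mulVec, dotProduct, Pi.zero_apply]
      rw [this]
      have h2 : ∑ k, t k * f k r = 0 := by
        have := congrFun hsum r
        simpa using this
      rw [h2]; ring
    · intro i hi; simp [hw', hi]; exact ht0 i
    · intro i hi; simp [hw', hi]; exact ht0 i
  have ht00 : ∀ k, t k = 0 := by
    intro k
    have := congrFun hker' k
    by_cases hk : k ∈ K <;> simp [hw', hk] at this <;> simpa using this
  simp [ht00] at hsumt
end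

section
/- Let A ∈ ℝ^{m×N} and K ⊆ [N]. If there exists v ∈ ℝ^m with (Aᵀv)_i < 0 for all i ∈ K and (Aᵀv)_i > 0 for all i ∉ K, then ker(A) ∩ H_K = {0}. -/
open Finset

theorem stmt_8 (m N : ℕ) (A : Matrix (Fin m) (Fin N) ℝ) (K : Set (Fin N))
    (v : Fin m → ℝ)
    (hv : (∀ i ∈ K, (A.transpose.mulVec v) i < 0) ∧
          (∀ i ∉ K, 0 < (A.transpose.mulVec v) i)) :
    ∀ w : Fin N → ℝ, A.mulVec w = 0 →
      (∀ i ∈ K, w i ≤ 0) → (∀ i ∉ K, 0 ≤ w i) → w = 0 := by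
  rintro w hw hK hKc
  have hsum : ∑ i, (A.transpose.mulVec v) i * w i = 0 := by
    have : ∑ i, (A.transpose.mulVec v) i * w i
        = ∑ j, v j * (A.mulVec w) j := by
      simp only [Matrix.mulVec, Matrix.transpose_apply, dotProduct,
        Finset.sum_mul, Finset.mul_sum]
      rw [Finset.sum_comm]
      exact Finset.sum_congr rfl fun j _ => Finset.sum_congr rfl fun i _ => by ring
    rw [this, hw]
    simp
  have hnn : ∀ i ∈ Finset.univ, 0 ≤ (A.transpose.mulVec v) i * w i := by
    intro i _
    by_cases h : i ∈ K
    · nlinarith [hv.1 i h, hK i h]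
    · exact mul_nonneg (hv.2 i h).le (hKc i h)
  have hz := (Finset.sum_eq_zero_iff_of_nonneg hnn).mp hsum
  funext i
  have := hz i (Finset.mem_univ i)
  by_cases h : i ∈ K
  · exact (mul_eq_zero.mp this).resolve_left (hv.1 i h).ne
  · exact (mul_eq_zero.mp this).resolve_left (hv.2 i h).ne'
end

section
/- Let A ∈ ℝ^{m×N}, K ⊆ [N], and s, t > 0. Suppose there exists ν ∈ ℝ^m with ‖ν‖₂ ≤ s, (Aᵀν)_i < -t for all i ∈ K, and (Aᵀν)_i > t for all i ∉ K. Then the H_K-restricted singular value σ_{H_K}(A) := min{‖Ax‖₂ : x ∈ H_K, ‖x‖₂ = 1} satisfies σ_{H_K}(A) ≥ t/s. -/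
open Finset

theorem stmt_9 (m N : ℕ) (A : Matrix (Fin m) (Fin N) ℝ) (K : Set (Fin N))
    (s t : ℝ) (hs : 0 < s) (ht : 0 < t) (ν : Fin m → ℝ)
    (hν : Real.sqrt (∑ r, (ν r) ^ 2) ≤ s)
    (hcert : (∀ i ∈ K, (A.transpose.mulVec ν) i < -t) ∧
             (∀ i ∉ K, t < (A.transpose.mulVec ν) i)) :
    ∀ x : Fin N → ℝ,
      (∀ i ∈ K, x i ≤ 0) → (∀ i ∉ K, 0 ≤ x i) →
      Real.sqrt (∑ i, (x i) ^ 2) = 1 →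
      t / s ≤ Real.sqrt (∑ r, (A.mulVec x r) ^ 2) := by
  intro x hxK hxKc hx2
  obtain ⟨hK, hKc⟩ := hcert
  -- ℓ1 norm bound: 1 = ‖x‖₂ ≤ ∑ |x i|
  have hl1 : 1 ≤ ∑ i, |x i| := by
    have h1 : (∑ i, (x i) ^ 2) ≤ (∑ i, |x i|) ^ 2 := by
      have := Finset.sum_sq_le_sq_sum_of_nonneg (s := Finset.univ)
        (f := fun i => |x i|) (fun i _ => abs_nonneg _)
      simpa [sq_abs] using this
    have h2 : Real.sqrt (∑ i, (x i) ^ 2) ≤ ∑ i, |x i| := by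
      calc Real.sqrt (∑ i, (x i) ^ 2) ≤ Real.sqrt ((∑ i, |x i|) ^ 2) :=
            Real.sqrt_le_sqrt h1
        _ = ∑ i, |x i| := Real.sqrt_sq (Finset.sum_nonneg fun i _ => abs_nonneg _)
    linarith [hx2 ▸ h2]
  -- pointwise: t * |x i| ≤ x i * (Aᵀν) i
  have hpt : ∀ i, t * |x i| ≤ x i * (A.transpose.mulVec ν) i := by
    intro i
    by_cases hi : i ∈ K
    · have h1 := hK i hi
      have h2 := hxK i hi
      rw [abs_of_nonpos h2]
      nlinarith
    · have h1 := hKc i hi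
      have h2 := hxKc i hi
      rw [abs_of_nonneg h2]
      nlinarith
  have hsum : t ≤ ∑ i, x i * (A.transpose.mulVec ν) i := by
    calc t = t * 1 := (mul_one t).symm
      _ ≤ t * ∑ i, |x i| := by nlinarith
      _ = ∑ i, t * |x i| := Finset.mul_sum _ _ _
      _ ≤ ∑ i, x i * (A.transpose.mulVec ν) i :=
          Finset.sum_le_sum fun i _ => hpt i
  -- swap sums: ⟨x, Aᵀν⟩ = ⟨Ax, ν⟩
  have hswap : (∑ i, x i * (A.transpose.mulVec ν) i) = ∑ r, (A.mulVec x r) * ν r := by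
    simp only [Matrix.mulVec, Matrix.transpose_apply, dotProduct,
      Finset.mul_sum, Finset.sum_mul]
    rw [Finset.sum_comm]
    apply Finset.sum_congr rfl; intro r _
    apply Finset.sum_congr rfl; intro i _
    ring
  -- Cauchy-Schwarz
  have hcs : (∑ r, (A.mulVec x r) * ν r) ≤
      Real.sqrt (∑ r, (A.mulVec x r) ^ 2) * Real.sqrt (∑ r, (ν r) ^ 2) := by
    have h := Finset.sum_mul_sq_le_sq_mul_sq Finset.univ (fun r => A.mulVec x r) ν
    have := Real.sqrt_le_sqrt h
    calc (∑ r, (A.mulVec x r) * ν r) ≤ |∑ r, (A.mulVec x r) * ν r| := le_abs_self _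
      _ = Real.sqrt ((∑ r, (A.mulVec x r) * ν r) ^ 2) := (Real.sqrt_sq_eq_abs _).symm
      _ ≤ Real.sqrt ((∑ r, (A.mulVec x r) ^ 2) * ∑ r, (ν r) ^ 2) := this
      _ = _ := Real.sqrt_mul (Finset.sum_nonneg fun r _ => sq_nonneg _) _
  have hν0 : 0 ≤ Real.sqrt (∑ r, (ν r) ^ 2) := Real.sqrt_nonneg _
  have hAx0 : 0 ≤ Real.sqrt (∑ r, (A.mulVec x r) ^ 2) := Real.sqrt_nonneg _
  have : t ≤ Real.sqrt (∑ r, (A.mulVec x r) ^ 2) * s := by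
    calc t ≤ ∑ i, x i * (A.transpose.mulVec ν) i := hsum
      _ = ∑ r, (A.mulVec x r) * ν r := hswap
      _ ≤ Real.sqrt (∑ r, (A.mulVec x r) ^ 2) * Real.sqrt (∑ r, (ν r) ^ 2) := hcs
      _ ≤ Real.sqrt (∑ r, (A.mulVec x r) ^ 2) * s := by nlinarith
  rw [div_le_iff₀ hs]
  linarith
end

section
/- Let A ∈ ℝ^{m×N}, K ⊆ [N], x₀ = 𝟙_K, and b = Ax₀ + n with ‖n‖₂ ≤ ε. Suppose there exist s, t > 0 and ν ∈ ℝ^m with ‖ν‖₂ ≤ s, (Aᵀν)_i < -t for i ∈ K and (Aᵀν)_i > t for i ∉ K. Then any minimizer x⋆ of ‖Ax - b‖₂ over x ∈ [0,1]^N satisfies ‖x⋆ - x₀‖₂ ≤ (2s/t)·ε. -/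
open Finset

private lemma eu_norm {m : ℕ} (u : Fin m → ℝ) :
    ‖(WithLp.equiv 2 (Fin m → ℝ)).symm u‖ = Real.sqrt (∑ r, (u r) ^ 2) := by
  rw [EuclideanSpace.norm_eq]
  simp [WithLp.equiv_symm_apply, PiLp.toLp_apply, Real.norm_eq_abs, sq_abs]

theorem stmt_10 (m N : ℕ) (A : Matrix (Fin m) (Fin N) ℝ) (K : Set (Fin N))
    (x₀ : Fin N → ℝ) (hx₀ : x₀ = Set.indicator K (fun _ => (1 : ℝ)))
    (n : Fin m → ℝ) (ε : ℝ) (hn : Real.sqrt (∑ r, (n r) ^ 2) ≤ ε)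
    (b : Fin m → ℝ) (hb : b = A.mulVec x₀ + n)
    (s t : ℝ) (hs : 0 < s) (ht : 0 < t) (ν : Fin m → ℝ)
    (hν : Real.sqrt (∑ r, (ν r) ^ 2) ≤ s)
    (hcert : (∀ i ∈ K, (A.transpose.mulVec ν) i < -t) ∧
             (∀ i ∉ K, t < (A.transpose.mulVec ν) i))
    (xs : Fin N → ℝ) (hxs : ∀ i, xs i ∈ Set.Icc (0 : ℝ) 1)
    (hopt : ∀ x : Fin N → ℝ, (∀ i, x i ∈ Set.Icc (0 : ℝ) 1) →
      Real.sqrt (∑ r, (A.mulVec xs r - b r) ^ 2)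
        ≤ Real.sqrt (∑ r, (A.mulVec x r - b r) ^ 2)) :
    Real.sqrt (∑ i, (xs i - x₀ i) ^ 2) ≤ (2 * s / t) * ε := by
  classical
  set h : Fin N → ℝ := fun i => xs i - x₀ i with hh
  have hx₀mem : ∀ i, x₀ i ∈ Set.Icc (0 : ℝ) 1 := by
    intro i
    by_cases hi : i ∈ K <;> simp [hx₀, Set.indicator, hi]
  have hεnn : (0 : ℝ) ≤ ε := le_trans (Real.sqrt_nonneg _) hn
  -- ‖A xs - b‖ ≤ ε
  have hAx0b : ∀ r, A.mulVec x₀ r - b r = -(n r) := by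
    intro r; simp [hb]
  have h1 : Real.sqrt (∑ r, (A.mulVec xs r - b r) ^ 2) ≤ ε := by
    refine le_trans (hopt x₀ hx₀mem) ?_
    calc Real.sqrt (∑ r, (A.mulVec x₀ r - b r) ^ 2)
        = Real.sqrt (∑ r, (n r) ^ 2) := by
          congr 1; exact Finset.sum_congr rfl fun r _ => by rw [hAx0b]; ring
      _ ≤ ε := hn
  -- ‖A h‖ ≤ 2ε
  have hAh : A.mulVec h = fun r => (A.mulVec xs r - b r) + n r := by
    funext r
    have : A.mulVec h r = A.mulVec xs r - A.mulVec x₀ r := by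
      simp [hh, Matrix.mulVec, dotProduct, mul_sub, Finset.sum_sub_distrib]
    rw [this, hb]; simp [Pi.add_apply]; ring
  have h2 : Real.sqrt (∑ r, (A.mulVec h r) ^ 2) ≤ 2 * ε := by
    rw [← eu_norm]
    have := norm_add_le ((WithLp.equiv 2 (Fin m → ℝ)).symm (fun r => A.mulVec xs r - b r))
      ((WithLp.equiv 2 (Fin m → ℝ)).symm n)
    have he : (WithLp.equiv 2 (Fin m → ℝ)).symm (A.mulVec h)
        = (WithLp.equiv 2 (Fin m → ℝ)).symm (fun r => A.mulVec xs r - b r)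
          + (WithLp.equiv 2 (Fin m → ℝ)).symm n := by
      rw [hAh]; rfl
    rw [he]
    refine le_trans this ?_
    rw [eu_norm, eu_norm]
    linarith
  -- t * ∑ |h i| ≤ s * (2 ε)
  have key : t * ∑ i, |h i| ≤ s * (2 * ε) := by
    have step1 : ∀ i, t * |h i| ≤ (A.transpose.mulVec ν) i * h i := by
      intro i
      by_cases hi : i ∈ K
      · have hx0i : x₀ i = 1 := by simp [hx₀, Set.indicator, hi]
        have hhi : h i ≤ 0 := by
          have := (hxs i).2; simp [hh, hx0i]; linarith
        have hc := hcert.1 i hi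
        rw [abs_of_nonpos hhi]
        nlinarith
      · have hx0i : x₀ i = 0 := by simp [hx₀, Set.indicator, hi]
        have hhi : 0 ≤ h i := by
          have := (hxs i).1; simp [hh, hx0i]; linarith
        have hc := hcert.2 i hi
        rw [abs_of_nonneg hhi]
        nlinarith
    have step2 : t * ∑ i, |h i| ≤ ∑ i, (A.transpose.mulVec ν) i * h i := by
      rw [Finset.mul_sum]
      exact Finset.sum_le_sum fun i _ => step1 i
    have step3 : ∑ i, (A.transpose.mulVec ν) i * h i = ∑ r, ν r * A.mulVec h r := by
      have : dotProduct (A.transpose.mulVec ν) h = dotProduct ν (A.mulVec h) := by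
        rw [Matrix.mulVec_transpose, ← Matrix.dotProduct_mulVec]
      simpa [dotProduct] using this
    have step4 : ∑ r, ν r * A.mulVec h r
        ≤ Real.sqrt (∑ r, (ν r) ^ 2) * Real.sqrt (∑ r, (A.mulVec h r) ^ 2) := by
      have hcs := Finset.sum_mul_sq_le_sq_mul_sq Finset.univ ν (A.mulVec h)
      have := Real.sqrt_le_sqrt hcs
      calc ∑ r, ν r * A.mulVec h r ≤ |∑ r, ν r * A.mulVec h r| := le_abs_self _
        _ = Real.sqrt ((∑ r, ν r * A.mulVec h r) ^ 2) := (Real.sqrt_sq_eq_abs _).symm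
        _ ≤ Real.sqrt ((∑ r, (ν r) ^ 2) * (∑ r, (A.mulVec h r) ^ 2)) := this
        _ = Real.sqrt (∑ r, (ν r) ^ 2) * Real.sqrt (∑ r, (A.mulVec h r) ^ 2) := by
            rw [Real.sqrt_mul (by positivity)]
    have step5 : Real.sqrt (∑ r, (ν r) ^ 2) * Real.sqrt (∑ r, (A.mulVec h r) ^ 2)
        ≤ s * (2 * ε) :=
      mul_le_mul hν h2 (Real.sqrt_nonneg _) hs.le
    linarith
  -- ℓ2 ≤ ℓ1
  have hl2l1 : Real.sqrt (∑ i, (h i) ^ 2) ≤ ∑ i, |h i| := by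
    have h1' : ∑ i, (h i) ^ 2 ≤ (∑ i, |h i|) ^ 2 := by
      have := Finset.sum_sq_le_sq_sum_of_nonneg (f := fun i => |h i|) (s := Finset.univ)
        (fun i _ => abs_nonneg _)
      simpa [sq_abs] using this
    calc Real.sqrt (∑ i, (h i) ^ 2) ≤ Real.sqrt ((∑ i, |h i|) ^ 2) := Real.sqrt_le_sqrt h1'
      _ = ∑ i, |h i| := Real.sqrt_sq (by positivity)
  have hl1 : ∑ i, |h i| ≤ 2 * s / t * ε := by
    rw [div_mul_eq_mul_div, le_div_iff₀ ht]
    nlinarith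
  exact le_trans hl2l1 hl1
end
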